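/- (Adequacy.) Let P be a program and suppose ⊢ P : M in the deterministic calculus, with M an n×n matrix over {0,1,2}^p → mwp^∞. Then for every assignment a ∈ {0,1,2}^p, the judgement ⊢_JK P : M[a] is derivable in the original Jones–Kristiansen calculus if and only if no entry of the mwp^∞-matrix M[a] equals ∞. -/

import Mathlib

/-! ## The mwp^∞ semi-ring -/

/-- The carrier of the mwp^∞ semi-ring: `{0, m, w, p, ∞}`. -/
inductive MwpI : Type
  | zero | m | w | p | inf
  deriving DecidableEq

instance instFintypeMwpI : Fintype MwpI where
  elems := ⟨↑[MwpI.zero, MwpI.m, MwpI.w, MwpI.p, MwpI.inf], by decide⟩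
  complete := by intro x; cases x <;> decide

/-- The position of an element in the linear order `0 < m < w < p < ∞`. -/
def MwpI.toNat : MwpI → ℕ
  | .zero => 0
  | .m => 1
  | .w => 2
  | .p => 3
  | .inf => 4

/-- mwp^∞ addition: `α +^∞ β = max (α, β)`. -/
def MwpI.add (a b : MwpI) : MwpI := if a.toNat ≤ b.toNat then b else a

/-- mwp^∞ multiplication: `α ×^∞ β = 0` if `α, β ≠ ∞` and (`α = 0` or `β = 0`),
and `max (α, β)` otherwise. -/
def MwpI.mul (a b : MwpI) : MwpI :=
  if a ≠ MwpI.inf ∧ b ≠ MwpI.inf ∧ (a = MwpI.zero ∨ b = MwpI.zero) then MwpI.zero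
  else a.add b

instance : Zero MwpI := ⟨MwpI.zero⟩
instance : Add MwpI := ⟨MwpI.add⟩

/-- mwp^∞ addition (max) is a commutative monoid with unit `0`. -/
instance : AddCommMonoid MwpI where
  add_assoc := by decide
  zero_add := by decide
  add_zero := by decide
  add_comm := by decide
  nsmul := nsmulRec
  nsmul_zero := fun _ => rfl
  nsmul_succ := fun _ _ => rfl

/-! ## The imperative language -/

/-- Expressions: `e ::= Xi | Xi + Xj | Xi − Xj | Xi * Xj` over `n` variables. -/
inductive Expr (n : ℕ) : Type
  | var (i : Fin n)
  | add (i j : Fin n)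
  | sub (i j : Fin n)
  | mul (i j : Fin n)

/-- Commands: `C ::= Xj = e | if b then C1 else C2 | while b do {C} | loop Xl {C} | C1;C2`
over `n` variables (boolean conditions `b` are ignored by the analysis).
A program is a sequence of commands, built with `seq`. -/
inductive Cmd (n : ℕ) : Type
  | assign (j : Fin n) (e : Expr n)
  | ifte (c₁ c₂ : Cmd n)
  | whl (c : Cmd n)
  | loop (l : Fin n) (c : Cmd n)
  | seq (c₁ c₂ : Cmd n)

/-! ## Matrices over the pointwise function semiring `{0,1,2}^p → mwp^∞` -/

/-- Coefficients: elements of the pointwise function semiring `{0,1,2}^p → mwp^∞`. -/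
abbrev Coef (p : ℕ) : Type := (Fin p → Fin 3) → MwpI

/-- `n × n` matrices with entries in `{0,1,2}^p → mwp^∞`. -/
abbrev Mat (n p : ℕ) : Type := Fin n → Fin n → Coef p

/-- `n`-vectors with entries in `{0,1,2}^p → mwp^∞`. -/
abbrev Vec (n p : ℕ) : Type := Fin n → Coef p

/-- The matrix product `M ⊗ N` (pointwise in the choice assignments). -/
def matMul {n p : ℕ} (M N : Mat n p) : Mat n p :=
  fun i j => ∑ k : Fin n, fun a => MwpI.mul (M i k a) (N k j a)

/-- The identity matrix (`m` on the diagonal, `0` elsewhere). -/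
def matId {n p : ℕ} : Mat n p :=
  fun i j => fun _ => if i = j then MwpI.m else MwpI.zero

/-- Matrix powers: `M⁰ = 1`, `M^(k+1) = M ⊗ M^k`. -/
def matPow {n p : ℕ} (M : Mat n p) : ℕ → Mat n p
  | 0 => matId
  | k + 1 => matMul M (matPow M k)

/-- The partial sum `1 ⊕ M ⊕ M² ⊕ … ⊕ M^N` of the closure. -/
def partialSum {n p : ℕ} (M : Mat n p) (N : ℕ) : Mat n p :=
  ∑ k ∈ Finset.range (N + 1), matPow M k

/-- `Ms` is the closure `M* = 1 ⊕ M ⊕ M² ⊕ …` of `M`: since addition is idempotent, the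
increasing sequence of partial sums stabilizes, and `M*` is the stable value. -/
def IsClosure {n p : ℕ} (M Ms : Mat n p) : Prop :=
  ∃ N, Ms = partialSum M N ∧ partialSum M (N + 1) = partialSum M N

/-- Reindexing a coefficient on the first `p₁` choices of `p₁ + p₂` choices. -/
def liftL {p₁ p₂ : ℕ} (f : Coef p₁) : Coef (p₁ + p₂) :=
  fun a => f fun i => a (Fin.castAdd p₂ i)

/-- Reindexing a coefficient on the last `p₂` choices of `p₁ + p₂` choices. -/
def liftR {p₁ p₂ : ℕ} (f : Coef p₂) : Coef (p₁ + p₂) :=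
  fun a => f fun i => a (Fin.natAdd p₁ i)

/-- Reindexing a matrix on the first `p₁` choices of `p₁ + p₂` choices. -/
def matLiftL {n p₁ p₂ : ℕ} (M : Mat n p₁) : Mat n (p₁ + p₂) := fun i j => liftL (M i j)

/-- Reindexing a matrix on the last `p₂` choices of `p₁ + p₂` choices. -/
def matLiftR {n p₁ p₂ : ℕ} (M : Mat n p₂) : Mat n (p₁ + p₂) := fun i j => liftR (M i j)

/-! ## The deterministic flow calculus -/

/-- The coefficient at row `i` of the vector assigned by rule `E^A`:
choice `0 ↦ m`, `1 ↦ p`, `2 ↦ w`. -/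
def eaLo (x : Fin 3) : MwpI := if x = 0 then MwpI.m else if x = 1 then MwpI.p else MwpI.w

/-- The coefficient at row `j` of the vector assigned by rule `E^A`:
choice `0 ↦ p`, `1 ↦ m`, `2 ↦ w`. -/
def eaHi (x : Fin 3) : MwpI := if x = 0 then MwpI.p else if x = 1 then MwpI.m else MwpI.w

/-- The vector assigned by rule `E^A` to `Xi ⋆ Xj` (`⋆ ∈ {+,−}`), with one choice index:
choice `0 ↦ {m at i, p at j}`, `1 ↦ {p at i, m at j}`, `2 ↦ {w at i, w at j}`. -/
def eaVec {n : ℕ} (i j : Fin n) : Vec n 1 :=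
  fun r a =>
    MwpI.add (if r = i then eaLo (a 0) else MwpI.zero)
      (if r = j then eaHi (a 0) else MwpI.zero)

/-- The vector assigned by rule `E^S` to `Xi`: `m` at row `i`, `0` elsewhere. -/
def esVec {n : ℕ} (i : Fin n) : Vec n 0 :=
  fun r => fun _ => if r = i then MwpI.m else MwpI.zero

/-- The vector assigned by rule `E^M` to `Xi * Xj`: `w` at rows `i` and `j`, `0` elsewhere. -/
def emVec {n : ℕ} (i j : Fin n) : Vec n 0 :=
  fun r => fun _ =>
    MwpI.add (if r = i then MwpI.w else MwpI.zero) (if r = j then MwpI.w else MwpI.zero)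

/-- The identity matrix with column `j` replaced by the vector `V` (rule `A`). -/
def assignMat {n p : ℕ} (j : Fin n) (V : Vec n p) : Mat n p :=
  fun r c =>
    if c = j then V r else fun _ => if r = c then MwpI.m else MwpI.zero

/-- The matrix assigned by rule `L^∞` to `loop Xl {C}` from the closure `Ms = M*`:
`M* ⊕ {∞ at (j,j) whenever M*ⱼⱼ ≠ m} ⊕ {p at (l,j) whenever M*ᵢⱼ = p for some i}`. -/
def loopOut {n p : ℕ} (l : Fin n) (Ms : Mat n p) : Mat n p :=
  fun i j a =>
    MwpI.add
      (MwpI.add (Ms i j a)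
        (if i = j ∧ Ms j j a ≠ MwpI.m then MwpI.inf else MwpI.zero))
      (if i = l ∧ (∃ i', Ms i' j a = MwpI.p) then MwpI.p else MwpI.zero)

/-- The matrix assigned by rule `W^∞` to `while b do {C}` from the closure `Ms = M*`:
`M* ⊕ {∞ at (j,j) whenever M*ⱼⱼ ≠ m} ⊕ {∞ at (i,j) whenever M*ᵢⱼ = p}`. -/
def whileOut {n p : ℕ} (Ms : Mat n p) : Mat n p :=
  fun i j a =>
    MwpI.add
      (MwpI.add (Ms i j a)
        (if i = j ∧ Ms j j a ≠ MwpI.m then MwpI.inf else MwpI.zero))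
      (if Ms i j a = MwpI.p then MwpI.inf else MwpI.zero)

/-- The deterministic calculus for expressions: `⊢ e : V`, with `p` choice indexes. -/
inductive EDeriv {n : ℕ} : Expr n → (p : ℕ) → Vec n p → Prop
  | var (i : Fin n) : EDeriv (.var i) 0 (esVec i)
  | mul (i j : Fin n) : EDeriv (.mul i j) 0 (emVec i j)
  | add (i j : Fin n) : EDeriv (.add i j) 1 (eaVec i j)
  | sub (i j : Fin n) : EDeriv (.sub i j) 1 (eaVec i j)

/-- The deterministic calculus for commands: `⊢ C : M`, with `p` choice indexes;
sequential composition and conditionals concatenate the choice indexes of their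
components (the first component's choices coming first). -/
inductive Deriv {n : ℕ} : Cmd n → (p : ℕ) → Mat n p → Prop
  | assign {e : Expr n} {p : ℕ} {V : Vec n p} (j : Fin n) :
      EDeriv e p V → Deriv (.assign j e) p (assignMat j V)
  | seq {c₁ c₂ : Cmd n} {p₁ p₂ : ℕ} {M₁ : Mat n p₁} {M₂ : Mat n p₂} :
      Deriv c₁ p₁ M₁ → Deriv c₂ p₂ M₂ →
      Deriv (.seq c₁ c₂) (p₁ + p₂) (matMul (matLiftL M₁) (matLiftR M₂))
  | ifte {c₁ c₂ : Cmd n} {p₁ p₂ : ℕ} {M₁ : Mat n p₁} {M₂ : Mat n p₂} :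
      Deriv c₁ p₁ M₁ → Deriv c₂ p₂ M₂ →
      Deriv (.ifte c₁ c₂) (p₁ + p₂) (matLiftL M₁ + matLiftR M₂)
  | loop {c : Cmd n} {p : ℕ} {M Ms : Mat n p} (l : Fin n) :
      Deriv c p M → IsClosure M Ms → Deriv (.loop l c) p (loopOut l Ms)
  | whl {c : Cmd n} {p : ℕ} {M Ms : Mat n p} :
      Deriv c p M → IsClosure M Ms → Deriv (.whl c) p (whileOut Ms)

/-! ## Evaluation of a matrix at an assignment -/

/-- Evaluating a matrix `M` over `{0,1,2}^p → mwp^∞` at an assignment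
`a ∈ {0,1,2}^p` yields the mwp^∞-matrix `M[a]` (entrywise application). -/
def evalMat {n p : ℕ} (M : Mat n p) (a : Fin p → Fin 3) : Fin n → Fin n → MwpI :=
  fun i j => M i j a

/-! ## The original (Jones–Kristiansen) nondeterministic calculus -/

/-- `n × n` matrices over mwp^∞ (the original calculus only ever produces
`∞`-free matrices, i.e. matrices over mwp). -/
abbrev SMat (n : ℕ) : Type := Fin n → Fin n → MwpI

/-- `n`-vectors over mwp^∞. -/
abbrev SVec (n : ℕ) : Type := Fin n → MwpI

/-- Matrix product. -/
def smatMul {n : ℕ} (M N : SMat n) : SMat n :=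
  fun i j => ∑ k : Fin n, MwpI.mul (M i k) (N k j)

/-- The identity matrix. -/
def smatId {n : ℕ} : SMat n := fun i j => if i = j then MwpI.m else MwpI.zero

/-- Matrix powers. -/
def smatPow {n : ℕ} (M : SMat n) : ℕ → SMat n
  | 0 => smatId
  | k + 1 => smatMul M (smatPow M k)

/-- The partial sum `1 ⊕ M ⊕ M² ⊕ … ⊕ M^N` of the closure. -/
def spartialSum {n : ℕ} (M : SMat n) (N : ℕ) : SMat n :=
  ∑ k ∈ Finset.range (N + 1), smatPow M k

/-- `Ms` is the closure `M* = 1 ⊕ M ⊕ M² ⊕ …` of `M`. -/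
def SIsClosure {n : ℕ} (M Ms : SMat n) : Prop :=
  ∃ N, Ms = spartialSum M N ∧ spartialSum M (N + 1) = spartialSum M N

/-- Whether variable `Xr` occurs in the expression `e`. -/
def occursIn {n : ℕ} : Expr n → Fin n → Bool
  | .var i, r => decide (r = i)
  | .add i j, r => decide (r = i ∨ r = j)
  | .sub i j, r => decide (r = i ∨ r = j)
  | .mul i j, r => decide (r = i ∨ r = j)

/-- The vector assigned by rule `E2`: `w` at each row `r` such that `Xr` occurs in `e`. -/
def e2Vec {n : ℕ} (e : Expr n) : SVec n :=
  fun r => if occursIn e r then MwpI.w else MwpI.zero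

/-- The scalar product `pV`. -/
def pSmul {n : ℕ} (V : SVec n) : SVec n := fun r => MwpI.mul MwpI.p (V r)

/-- The identity matrix with column `j` replaced by the vector `V` (rule `A`). -/
def sAssignMat {n : ℕ} (j : Fin n) (V : SVec n) : SMat n :=
  fun r c => if c = j then V r else if r = c then MwpI.m else MwpI.zero

/-- The original nondeterministic calculus for expressions:
`⊢_JK e : V` (rules `E1`–`E4`). -/
inductive JKE {n : ℕ} : Expr n → SVec n → Prop
  | e1 (i : Fin n) : JKE (.var i) (fun r => if r = i then MwpI.m else MwpI.zero)
  | e2 (e : Expr n) : JKE e (e2Vec e)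
  | e3add {i j : Fin n} {V₁ V₂ : SVec n} :
      JKE (.var i) V₁ → JKE (.var j) V₂ → JKE (.add i j) (pSmul V₁ + V₂)
  | e3sub {i j : Fin n} {V₁ V₂ : SVec n} :
      JKE (.var i) V₁ → JKE (.var j) V₂ → JKE (.sub i j) (pSmul V₁ + V₂)
  | e4add {i j : Fin n} {V₁ V₂ : SVec n} :
      JKE (.var i) V₁ → JKE (.var j) V₂ → JKE (.add i j) (V₁ + pSmul V₂)
  | e4sub {i j : Fin n} {V₁ V₂ : SVec n} :
      JKE (.var i) V₁ → JKE (.var j) V₂ → JKE (.sub i j) (V₁ + pSmul V₂)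

/-- The original nondeterministic calculus for commands: `⊢_JK C : M`
(rules `A`, `C`, `I`, `L`, `W`, with their side conditions). -/
inductive JKC {n : ℕ} : Cmd n → SMat n → Prop
  | assign {e : Expr n} {V : SVec n} (j : Fin n) :
      JKE e V → JKC (.assign j e) (sAssignMat j V)
  | seq {c₁ c₂ : Cmd n} {M₁ M₂ : SMat n} :
      JKC c₁ M₁ → JKC c₂ M₂ → JKC (.seq c₁ c₂) (smatMul M₁ M₂)
  | ifte {c₁ c₂ : Cmd n} {M₁ M₂ : SMat n} :
      JKC c₁ M₁ → JKC c₂ M₂ → JKC (.ifte c₁ c₂) (M₁ + M₂)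
  | loop {c : Cmd n} {M Ms : SMat n} (l : Fin n) :
      JKC c M → SIsClosure M Ms → (∀ i, Ms i i = MwpI.m) →
      JKC (.loop l c)
        (fun i j =>
          MwpI.add (Ms i j)
            (if i = l ∧ (∃ i', Ms i' j = MwpI.p) then MwpI.p else MwpI.zero))
  | whl {c : Cmd n} {M Ms : SMat n} :
      JKC c M → SIsClosure M Ms → (∀ i, Ms i i = MwpI.m) →
      (∀ i j, Ms i j ≠ MwpI.p) → JKC (.whl c) Ms

/-! Both directions are inductions on derivations. In mwp^∞ a sum or product equals `∞` exactly
when one of its arguments does, so the rules of the original calculus, whose axioms are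
`∞`-free, never produce `∞`. Conversely, evaluation at `a` commutes with products, sums, powers
and closures, and fixing the choice of an `E^A` leaf selects one of the rules `E4`, `E3`, `E2`.
The `∞` entries that `L^∞` and `W^∞` add record precisely the failure of the side conditions of
`L` and `W`; when `M[a]` is `∞`-free those conditions hold and the extra entries vanish, leaving
the matrix that `L` or `W` derives. -/

namespace MwpI

lemma add_zero' : ∀ x : MwpI, x.add zero = x := by decide

@[simp] lemma add_eq (x y : MwpI) : x.add y = x + y := rfl

@[simp] lemma add_eq_inf_iff : ∀ x y : MwpI, x + y = inf ↔ x = inf ∨ y = inf := by decide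

@[simp] lemma mul_eq_inf_iff : ∀ x y : MwpI, x.mul y = inf ↔ x = inf ∨ y = inf := by decide

lemma sum_eq_inf_iff {ι : Type*} (s : Finset ι) (f : ι → MwpI) :
    ∑ i ∈ s, f i = inf ↔ ∃ i ∈ s, f i = inf := by
  classical
  induction s using Finset.induction_on with
  | empty => simp
  | insert k s hk ih => simp [Finset.sum_insert hk, ih]

end MwpI

def InfFree {n : ℕ} (M : SMat n) : Prop := ∀ i j, M i j ≠ MwpI.inf

section InfFree

variable {n : ℕ}

lemma infFree_add_iff {A B : SMat n} : InfFree (A + B) ↔ InfFree A ∧ InfFree B := by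
  simp only [InfFree, Pi.add_apply, ne_eq, MwpI.add_eq_inf_iff, not_or]
  exact ⟨fun h => ⟨fun i j => (h i j).1, fun i j => (h i j).2⟩, fun h i j => ⟨h.1 i j, h.2 i j⟩⟩

lemma infFree_sum_iff {ι : Type*} {s : Finset ι} {F : ι → SMat n} :
    InfFree (∑ k ∈ s, F k) ↔ ∀ k ∈ s, InfFree (F k) := by
  simp only [InfFree, Finset.sum_apply, ne_eq, MwpI.sum_eq_inf_iff, not_exists, not_and]
  exact ⟨fun h k hk i j => h i j k hk, fun h i j k hk => h k hk i j⟩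

lemma infFree_smatMul_iff {A B : SMat n} :
    InfFree (smatMul A B) ↔ InfFree A ∧ InfFree B := by
  simp only [InfFree, smatMul, ne_eq, MwpI.sum_eq_inf_iff, Finset.mem_univ, true_and,
    MwpI.mul_eq_inf_iff, not_exists, not_or]
  refine ⟨fun h => ⟨fun i k => (h i k k).1, fun k j => (h k j k).2⟩,
    fun h i j k => ⟨h.1 i k, h.2 k j⟩⟩

lemma infFree_smatId : InfFree (smatId : SMat n) := by
  intro i j
  unfold smatId
  split <;> decide

lemma InfFree.smatPow {A : SMat n} (hA : InfFree A) : ∀ k, InfFree (smatPow A k)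
  | 0 => infFree_smatId
  | k + 1 => infFree_smatMul_iff.2 ⟨hA, hA.smatPow k⟩

lemma SIsClosure.infFree_iff {A As : SMat n} (h : SIsClosure A As) :
    InfFree As ↔ InfFree A := by
  obtain ⟨N, rfl, hfix⟩ := h
  refine ⟨fun hAs => ?_, fun hA => infFree_sum_iff.2 fun k _ => hA.smatPow k⟩
  rw [← hfix, spartialSum, infFree_sum_iff] at hAs
  exact (infFree_smatMul_iff.1 (hAs 1 (by simp))).1

end InfFree

lemma JKE.ne_inf {n : ℕ} {e : Expr n} {V : SVec n} (h : JKE e V) (r : Fin n) :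
    V r ≠ MwpI.inf := by
  induction h with
  | e1 i => dsimp only; split <;> decide
  | e2 e => unfold e2Vec; split <;> decide
  | e3add _ _ ih₁ ih₂ | e3sub _ _ ih₁ ih₂ | e4add _ _ ih₁ ih₂ | e4sub _ _ ih₁ ih₂ =>
    simp [pSmul, ih₁, ih₂]

lemma JKC.infFree {n : ℕ} {P : Cmd n} {M : SMat n} (h : JKC P M) : InfFree M := by
  induction h with
  | assign j he =>
    intro r c
    unfold sAssignMat
    split
    · exact he.ne_inf r
    · split <;> decide
  | seq _ _ ih₁ ih₂ => exact infFree_smatMul_iff.2 ⟨ih₁, ih₂⟩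
  | ifte _ _ ih₁ ih₂ => exact infFree_add_iff.2 ⟨ih₁, ih₂⟩
  | loop l _ hcl _ ih =>
    intro i j
    simp only [MwpI.add_eq, ne_eq, MwpI.add_eq_inf_iff, not_or]
    exact ⟨hcl.infFree_iff.2 ih i j, by split <;> decide⟩
  | whl _ hcl _ _ ih => exact hcl.infFree_iff.2 ih

section Evaluation

variable {n p : ℕ}

lemma evalMat_matMul (M N : Mat n p) (a : Fin p → Fin 3) :
    evalMat (matMul M N) a = smatMul (evalMat M a) (evalMat N a) := by
  funext i j
  simp only [evalMat, matMul, smatMul, Finset.sum_apply]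

lemma evalMat_matPow (M : Mat n p) (a : Fin p → Fin 3) :
    ∀ k, evalMat (matPow M k) a = smatPow (evalMat M a) k
  | 0 => rfl
  | k + 1 => by rw [matPow, smatPow, evalMat_matMul, evalMat_matPow M a k]

lemma evalMat_partialSum (M : Mat n p) (a : Fin p → Fin 3) (N : ℕ) :
    evalMat (partialSum M N) a = spartialSum (evalMat M a) N := by
  funext i j
  simp only [evalMat, partialSum, spartialSum, Finset.sum_apply, ← evalMat_matPow M a]

lemma IsClosure.evalMat {M Ms : Mat n p} (h : IsClosure M Ms) (a : Fin p → Fin 3) :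
    SIsClosure (evalMat M a) (evalMat Ms a) := by
  obtain ⟨N, rfl, hfix⟩ := h
  exact ⟨N, evalMat_partialSum M a N, by rw [← evalMat_partialSum, ← evalMat_partialSum, hfix]⟩

lemma evalMat_matLiftL {p₂ : ℕ} (M : Mat n p) (a : Fin (p + p₂) → Fin 3) :
    evalMat (matLiftL M) a = evalMat M fun i => a (Fin.castAdd p₂ i) := rfl

lemma evalMat_matLiftR {p₁ : ℕ} (M : Mat n p) (a : Fin (p₁ + p) → Fin 3) :
    evalMat (matLiftR M) a = evalMat M fun i => a (Fin.natAdd p₁ i) := rfl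

lemma evalMat_assignMat (j : Fin n) (V : Vec n p) (a : Fin p → Fin 3) :
    evalMat (assignMat j V) a = sAssignMat j (fun r => V r a) := by
  funext r c
  unfold evalMat assignMat sAssignMat
  split_ifs <;> rfl

lemma evalMat_add (M N : Mat n p) (a : Fin p → Fin 3) :
    evalMat (M + N) a = evalMat M a + evalMat N a := rfl

end Evaluation

section Expressions

variable {n : ℕ}

def basisVec (i : Fin n) : SVec n := fun r => if r = i then MwpI.m else MwpI.zero

lemma eaVec_eval_of_eq_zero (i j : Fin n) {a : Fin 1 → Fin 3} (ha : a 0 = 0) :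
    (fun r => eaVec i j r a) = basisVec i + pSmul (basisVec j) := by
  funext r
  simp only [eaVec, eaLo, eaHi, basisVec, pSmul, Pi.add_apply, ha]
  split_ifs <;> simp_all <;> decide

lemma eaVec_eval_of_eq_one (i j : Fin n) {a : Fin 1 → Fin 3} (ha : a 0 = 1) :
    (fun r => eaVec i j r a) = pSmul (basisVec i) + basisVec j := by
  funext r
  simp only [eaVec, eaLo, eaHi, basisVec, pSmul, Pi.add_apply, ha]
  split_ifs <;> simp_all <;> decide

lemma eaVec_eval_of_eq_two (i j : Fin n) {a : Fin 1 → Fin 3} (ha : a 0 = 2) :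
    (fun r => eaVec i j r a) = e2Vec (.add i j) := by
  funext r
  simp only [eaVec, eaLo, eaHi, e2Vec, occursIn, ha]
  split_ifs <;> simp_all <;> decide

lemma emVec_eval (i j : Fin n) (a : Fin 0 → Fin 3) :
    (fun r => emVec i j r a) = e2Vec (.mul i j) := by
  funext r
  simp only [emVec, e2Vec, occursIn]
  split_ifs <;> simp_all <;> decide

end Expressions

section Iteration

variable {n p : ℕ}

def sLoopOut (l : Fin n) (Ms : SMat n) : SMat n :=
  fun i j => MwpI.add (Ms i j) (if i = l ∧ ∃ i', Ms i' j = MwpI.p then MwpI.p else MwpI.zero)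

lemma infFree_evalMat_loopOut_iff (l : Fin n) (Ms : Mat n p) (a : Fin p → Fin 3) :
    InfFree (evalMat (loopOut l Ms) a) ↔ InfFree (evalMat Ms a) ∧ ∀ j, Ms j j a = MwpI.m := by
  simp only [InfFree, evalMat, loopOut, MwpI.add_eq, ne_eq, MwpI.add_eq_inf_iff,
    ite_eq_left_iff, reduceCtorEq, imp_false, not_not, not_or, not_and]
  refine ⟨fun h => ⟨fun i j => (h i j).1.1, fun j => (h j j).1.2 rfl⟩,
    fun ⟨hMs, hdiag⟩ i j => ⟨⟨hMs i j, fun _ => hdiag j⟩, by split <;> decide⟩⟩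

lemma evalMat_loopOut_of_diag (l : Fin n) {Ms : Mat n p} {a : Fin p → Fin 3}
    (hdiag : ∀ j, Ms j j a = MwpI.m) : evalMat (loopOut l Ms) a = sLoopOut l (evalMat Ms a) := by
  funext i j
  have hdiag' : ¬(i = j ∧ Ms j j a ≠ MwpI.m) := fun h => h.2 (hdiag j)
  simp only [evalMat, loopOut, sLoopOut, if_neg hdiag', MwpI.add_zero']
  -- the sides now differ only in the `Decidable` instance of the `p`-condition
  rfl

lemma infFree_evalMat_whileOut_iff (Ms : Mat n p) (a : Fin p → Fin 3) :
    InfFree (evalMat (whileOut Ms) a) ↔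
      InfFree (evalMat Ms a) ∧ (∀ j, Ms j j a = MwpI.m) ∧ ∀ i j, Ms i j a ≠ MwpI.p := by
  simp only [InfFree, evalMat, whileOut, MwpI.add_eq, ne_eq, MwpI.add_eq_inf_iff,
    ite_eq_left_iff, reduceCtorEq, imp_false, not_not, not_or, not_and]
  refine ⟨fun h => ⟨fun i j => (h i j).1.1, fun j => (h j j).1.2 rfl, fun i j => (h i j).2⟩,
    fun ⟨hMs, hdiag, hp⟩ i j => ⟨⟨hMs i j, fun _ => hdiag j⟩, hp i j⟩⟩

lemma evalMat_whileOut_of_diag_of_ne_p {Ms : Mat n p} {a : Fin p → Fin 3}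
    (hdiag : ∀ j, Ms j j a = MwpI.m) (hp : ∀ i j, Ms i j a ≠ MwpI.p) :
    evalMat (whileOut Ms) a = evalMat Ms a := by
  funext i j
  have hdiag' : ¬(i = j ∧ Ms j j a ≠ MwpI.m) := fun h => h.2 (hdiag j)
  simp only [evalMat, whileOut, if_neg hdiag', if_neg (hp i j), MwpI.add_zero']

end Iteration

lemma EDeriv.jke {n : ℕ} {e : Expr n} {p : ℕ} {V : Vec n p} (h : EDeriv e p V)
    (a : Fin p → Fin 3) : JKE e (fun r => V r a) := by
  cases h with
  | var i => exact .e1 i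
  | mul i j => rw [emVec_eval]; exact .e2 _
  | add i j =>
    match ha : a 0 with
    | 0 => rw [eaVec_eval_of_eq_zero i j ha]; exact .e4add (.e1 i) (.e1 j)
    | 1 => rw [eaVec_eval_of_eq_one i j ha]; exact .e3add (.e1 i) (.e1 j)
    | 2 => rw [eaVec_eval_of_eq_two i j ha]; exact .e2 _
  | sub i j =>
    match ha : a 0 with
    | 0 => rw [eaVec_eval_of_eq_zero i j ha]; exact .e4sub (.e1 i) (.e1 j)
    | 1 => rw [eaVec_eval_of_eq_one i j ha]; exact .e3sub (.e1 i) (.e1 j)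
    | 2 => rw [eaVec_eval_of_eq_two i j ha]; exact .e2 (.sub i j)

lemma Deriv.jkc_of_infFree {n : ℕ} {P : Cmd n} {p : ℕ} {M : Mat n p} (h : Deriv P p M)
    (a : Fin p → Fin 3) (hM : InfFree (evalMat M a)) : JKC P (evalMat M a) := by
  induction h with
  | assign j he =>
    rw [evalMat_assignMat]
    exact .assign j (he.jke a)
  | seq _ _ ih₁ ih₂ =>
    rw [evalMat_matMul, evalMat_matLiftL, evalMat_matLiftR] at hM ⊢
    obtain ⟨h₁, h₂⟩ := infFree_smatMul_iff.1 hM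
    exact .seq (ih₁ _ h₁) (ih₂ _ h₂)
  | ifte _ _ ih₁ ih₂ =>
    rw [evalMat_add, evalMat_matLiftL, evalMat_matLiftR] at hM ⊢
    obtain ⟨h₁, h₂⟩ := infFree_add_iff.1 hM
    exact .ifte (ih₁ _ h₁) (ih₂ _ h₂)
  | loop l _ hcl ih =>
    obtain ⟨hMs, hdiag⟩ := (infFree_evalMat_loopOut_iff l _ a).1 hM
    have hcl := hcl.evalMat a
    rw [evalMat_loopOut_of_diag l hdiag]
    exact .loop l (ih a (hcl.infFree_iff.1 hMs)) hcl hdiag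
  | whl _ hcl ih =>
    obtain ⟨hMs, hdiag, hp⟩ := (infFree_evalMat_whileOut_iff _ a).1 hM
    have hcl := hcl.evalMat a
    rw [evalMat_whileOut_of_diag_of_ne_p hdiag hp]
    exact .whl (ih a (hcl.infFree_iff.1 hMs)) hcl hdiag hp

/-- (Adequacy.)  Let `P` be a program with `⊢ P : M` in the deterministic calculus,
`M` an `n × n` matrix over `{0,1,2}^p → mwp^∞`.  Then for every assignment
`a ∈ {0,1,2}^p`, the judgement `⊢_JK P : M[a]` is derivable in the original
Jones–Kristiansen calculus if and only if no entry of `M[a]` equals `∞`. -/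
theorem adequacy {n : ℕ} (P : Cmd n) {p : ℕ} {M : Mat n p}
    (h : Deriv P p M) (a : Fin p → Fin 3) :
    JKC P (evalMat M a) ↔ ∀ i j, evalMat M a i j ≠ MwpI.inf :=
  ⟨JKC.infFree, h.jkc_of_infFree a⟩
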